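/- Define the three-dimensional vector field G = (G₁, G₂, G₃) on ℝ³ by G₁(H,σ,Φ) := (−24πΦ² − (9/8)(σ² + H²) − (3/4)σH − (1/3)(1 − H²))·(1 − H²), G₂(H,σ,Φ) := (24πΦ² + (9/8)σ² − (9/4)Hσ − (1/3)(1 − H²) − (15/8)H²) + Hσ·(24πΦ² + (9/8)(σ² + H²) + (3/4)Hσ + (1/3)(1 − H²)), G₃(H,σ,Φ) := (24πΦ² + (9/8)(σ² + H²) + (3/4)Hσ + (1/3)(1 − H²))·HΦ − 3HΦ, and let f₁(s) := (1/(8√π))·√(−3s² − 2s + 5) for −5/3 ≤ s ≤ 1. Then for every s ∈ [−5/3, 1] the points (1, s, f₁(s)) and (1, s, −f₁(s)) are equilibrium points of G, i.e. G(1, s, ±f₁(s)) = (0, 0, 0). -/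

import Mathlib

open Real

/-- First component of the compactified scalar-field vector field. -/
noncomputable def G₁ (H σ Φ : ℝ) : ℝ :=
  (-24 * π * Φ ^ 2 - (9 / 8) * (σ ^ 2 + H ^ 2) - (3 / 4) * (σ * H)
      - (1 / 3) * (1 - H ^ 2)) * (1 - H ^ 2)

/-- Second component of the compactified scalar-field vector field. -/
noncomputable def G₂ (H σ Φ : ℝ) : ℝ :=
  (24 * π * Φ ^ 2 + (9 / 8) * σ ^ 2 - (9 / 4) * (H * σ) - (1 / 3) * (1 - H ^ 2)
      - (15 / 8) * H ^ 2)
    + H * σ * (24 * π * Φ ^ 2 + (9 / 8) * (σ ^ 2 + H ^ 2) + (3 / 4) * (H * σ)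
      + (1 / 3) * (1 - H ^ 2))

/-- Third component of the compactified scalar-field vector field. -/
noncomputable def G₃ (H σ Φ : ℝ) : ℝ :=
  (24 * π * Φ ^ 2 + (9 / 8) * (σ ^ 2 + H ^ 2) + (3 / 4) * (H * σ)
      + (1 / 3) * (1 - H ^ 2)) * (H * Φ) - 3 * (H * Φ)

/-- The profile `f₁` of the fixed-point curves at the future boundary. -/
noncomputable def f₁ (s : ℝ) : ℝ :=
  (1 / (8 * Real.sqrt π)) * Real.sqrt (-3 * s ^ 2 - 2 * s + 5)


/-- At `H = 1` the components factor as `G₂ = (1 + σ) (Ω - 3)` and `G₃ = Φ (Ω - 3)`, where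
`Ω = 24πΦ² + (9/8)(σ² + 1) + (3/4)σ` is the common bracket, so all three vanish on `Ω = 3`. -/
theorem G_eq_zero_of_constraint {σ Φ : ℝ}
    (h : 24 * π * Φ ^ 2 = 3 / 8 * (-3 * σ ^ 2 - 2 * σ + 5)) :
    G₁ 1 σ Φ = 0 ∧ G₂ 1 σ Φ = 0 ∧ G₃ 1 σ Φ = 0 := by
  unfold G₁ G₂ G₃
  exact ⟨by ring, by linear_combination (1 + σ) * h, by linear_combination Φ * h⟩

theorem f₁_sq {s : ℝ} (hs : s ∈ Set.Icc (-(5 / 3) : ℝ) 1) :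
    f₁ s ^ 2 = (-3 * s ^ 2 - 2 * s + 5) / (64 * π) := by
  have hrad : 0 ≤ -3 * s ^ 2 - 2 * s + 5 := by nlinarith [hs.1, hs.2]
  rw [f₁, mul_pow, div_pow, mul_pow, sq_sqrt pi_pos.le, sq_sqrt hrad]
  ring

/-- For every `s ∈ [−5/3, 1]`, the points `(1, s, ±f₁(s))` are equilibrium points of the
compactified Einstein–scalar-field vector field `G = (G₁, G₂, G₃)`. -/
theorem fixed_point_curves_future_boundary :
    ∀ s ∈ Set.Icc (-(5 / 3) : ℝ) 1,
      (G₁ 1 s (f₁ s) = 0 ∧ G₂ 1 s (f₁ s) = 0 ∧ G₃ 1 s (f₁ s) = 0) ∧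
      (G₁ 1 s (-f₁ s) = 0 ∧ G₂ 1 s (-f₁ s) = 0 ∧ G₃ 1 s (-f₁ s) = 0) := by
  intro s hs
  have hconstraint : 24 * π * f₁ s ^ 2 = 3 / 8 * (-3 * s ^ 2 - 2 * s + 5) := by
    rw [f₁_sq hs]
    field_simp [pi_pos.ne']
    ring
  exact ⟨G_eq_zero_of_constraint hconstraint,
    G_eq_zero_of_constraint (by rwa [neg_sq])⟩
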